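/- Let A ∈ ℝ^{n×n} be symmetric, ε > 0, and let E : I → ℝ^{n×n} be differentiable on an open interval I with E(t) symmetric for all t. Let λ : I → ℝ and let v : I → ℝⁿ be differentiable with ‖v(t)‖₂ = 1 and (A + εE(t)) v(t) = λ(t) v(t) for all t ∈ I. Let A†(t) be the Moore–Penrose pseudoinverse of A + εE(t) − λ(t)I (satisfying the four Penrose equations), and suppose the eigenvector derivative formula v̇(t) = −ε A†(t) Ė(t) v(t) holds. Fix m distinct indices i₁, …, i_m; write ⟨v⟩_m = (1/m) Σ_{j=1}^m v_{i_j}, let u_i denote the i-th standard basis vector and ū = (1/m) Σ_{j=1}^m u_{i_j}, and define F(t) = (1/2) Σ_{k=1}^m ( v_{i_k}(t) − ⟨v(t)⟩_m )². Let ℰ be a symmetric edge set and suppose Ė(t) is supported on ℰ. Then d/dt F(t) = ε ⟨ G(t), Ė(t) ⟩, where G = −P_ℰ( Σ_{k=1}^m ( v_{i_k} − ⟨v⟩_m ) · sym( A† ( u_{i_k} − ū ) vᵀ ) ) and sym(B) = (B + Bᵀ)/2. -/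

import Mathlib

/-!
With `c_k = (u_{i_k} - ū) ⬝ v` we have `Ḟ = Σ_k c_k (u_{i_k} - ū) ⬝ v̇`, and by the eigenvector
formula `(u_{i_k} - ū) ⬝ v̇ = -ε (A† (u_{i_k} - ū)) ⬝ Ė v`: `A†` crosses the dot product because the
Moore–Penrose inverse of a symmetric matrix is symmetric, by uniqueness of the Moore–Penrose
inverse. Finally `w ⬝ Ė v = ⟨w vᵀ, Ė⟩`, and since `Ė` is symmetric and supported on `ℰ`, `w vᵀ`
may be replaced by `P_ℰ (sym (w vᵀ))`.
-/

open Matrix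

/-- Orthogonal projection onto matrices supported on an edge set `Ed`. -/
def projPattern {n : ℕ} (Ed : Set (Fin n × Fin n)) [DecidablePred (· ∈ Ed)]
    (B : Matrix (Fin n) (Fin n) ℝ) : Matrix (Fin n) (Fin n) ℝ :=
  Matrix.of fun i j => if (i, j) ∈ Ed then B i j else 0

/-- The Frobenius inner product `⟨X, Y⟩ = trace(Xᵀ Y)`. -/
def frobInner {n : ℕ} (X Y : Matrix (Fin n) (Fin n) ℝ) : ℝ :=
  Matrix.trace (Xᵀ * Y)

/-- Symmetric part `sym(B) = (B + Bᵀ)/2`. -/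
noncomputable def symPart {n : ℕ} (B : Matrix (Fin n) (Fin n) ℝ) : Matrix (Fin n) (Fin n) ℝ :=
  (1 / 2 : ℝ) • (B + Bᵀ)

open Filter Topology

namespace Matrix

variable {l p α : Type*} [Fintype l] [Fintype p] [CommSemiring α]

def IsPenroseInverse (N : Matrix l p α) (B : Matrix p l α) : Prop :=
  N * B * N = N ∧ B * N * B = B ∧ (N * B)ᵀ = N * B ∧ (B * N)ᵀ = B * N

namespace IsPenroseInverse

variable {N : Matrix l p α} {B C : Matrix p l α}

theorem unique (hB : IsPenroseInverse N B) (hC : IsPenroseInverse N C) : B = C := by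
  obtain ⟨hB₁, hB₂, hB₃, hB₄⟩ := hB
  obtain ⟨hC₁, hC₂, hC₃, hC₄⟩ := hC
  have hNB : N * B = N * C :=
    calc N * B = N * C * N * B := by rw [hC₁]
    _ = (N * C)ᵀ * (N * B)ᵀ := by rw [hC₃, hB₃, Matrix.mul_assoc (N * C)]
    _ = (N * B * N * C)ᵀ := by rw [← transpose_mul, ← Matrix.mul_assoc]
    _ = N * C := by rw [hB₁, hC₃]
  have hBN : B * N = C * N :=
    calc B * N = B * N * C * N := by rw [Matrix.mul_assoc B N C, Matrix.mul_assoc B, hC₁]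
    _ = (B * N)ᵀ * (C * N)ᵀ := by rw [hB₄, hC₄, Matrix.mul_assoc (B * N)]
    _ = (C * N * B * N)ᵀ := by rw [← transpose_mul, ← Matrix.mul_assoc]
    _ = C * N := by rw [Matrix.mul_assoc C N B, Matrix.mul_assoc C (N * B), hB₁, hC₄]
  calc B = B * N * B := hB₂.symm
  _ = C * N * C := by rw [Matrix.mul_assoc, hNB, ← Matrix.mul_assoc, hBN]
  _ = C := hC₂

theorem transpose (hB : IsPenroseInverse N B) : IsPenroseInverse Nᵀ Bᵀ := by
  obtain ⟨h₁, h₂, h₃, h₄⟩ := hB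
  refine ⟨?_, ?_, ?_, ?_⟩
  · rw [← transpose_mul, ← transpose_mul, ← Matrix.mul_assoc, h₁]
  · rw [← transpose_mul, ← transpose_mul, ← Matrix.mul_assoc, h₂]
  · rw [← transpose_mul, h₄]; exact h₄
  · rw [← transpose_mul, h₃]; exact h₃

theorem isSymm {N B : Matrix l l α} (hB : IsPenroseInverse N B)
    (hN : N.IsSymm) : B.IsSymm := by
  have hBt := hB.transpose
  rw [hN.eq] at hBt
  exact hBt.unique hB

end IsPenroseInverse

theorem IsSymm.of_hasDerivAt {𝕜 ι : Type*} [NontriviallyNormedField 𝕜]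
    {E : 𝕜 → Matrix ι ι 𝕜} {E' : Matrix ι ι 𝕜} {t : 𝕜}
    (hE : ∀ i j, HasDerivAt (fun s => E s i j) (E' i j) t)
    (hsymm : ∀ᶠ s in 𝓝 t, (E s).IsSymm) : E'.IsSymm :=
  IsSymm.ext fun i j =>
    (hE j i).unique ((hE i j).congr_of_eventuallyEq (hsymm.mono fun _ hs => hs.apply i j))

end Matrix

section Frobenius

variable {n : ℕ}

theorem frobInner_eq_sum (X Y : Matrix (Fin n) (Fin n) ℝ) :
    frobInner X Y = ∑ i, ∑ j, X i j * Y i j := by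
  simp only [frobInner, trace, diag, mul_apply, transpose_apply]
  exact Finset.sum_comm

theorem frobInner_neg_left (X Y : Matrix (Fin n) (Fin n) ℝ) :
    frobInner (-X) Y = -frobInner X Y := by
  simp only [frobInner, transpose_neg, Matrix.neg_mul, trace_neg]

theorem frobInner_sum_smul_left {ι : Type*} (s : Finset ι) (c : ι → ℝ)
    (X : ι → Matrix (Fin n) (Fin n) ℝ) (Y : Matrix (Fin n) (Fin n) ℝ) :
    frobInner (∑ k ∈ s, c k • X k) Y = ∑ k ∈ s, c k * frobInner (X k) Y := by
  simp only [frobInner, transpose_sum, transpose_smul, Matrix.sum_mul, Matrix.smul_mul,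
    trace_sum, trace_smul, smul_eq_mul]

theorem frobInner_projPattern_left (Ed : Set (Fin n × Fin n)) [DecidablePred (· ∈ Ed)]
    (X Y : Matrix (Fin n) (Fin n) ℝ) (hY : ∀ i j, (i, j) ∉ Ed → Y i j = 0) :
    frobInner (projPattern Ed X) Y = frobInner X Y := by
  simp only [frobInner_eq_sum, projPattern, of_apply]
  refine Finset.sum_congr rfl fun i _ => Finset.sum_congr rfl fun j _ => ?_
  by_cases h : (i, j) ∈ Ed
  · rw [if_pos h]
  · rw [if_neg h, hY i j h, zero_mul, mul_zero]

theorem frobInner_symPart_left (X Y : Matrix (Fin n) (Fin n) ℝ) (hY : Y.IsSymm) :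
    frobInner (symPart X) Y = frobInner X Y := by
  have hXY : trace (X * Y) = trace (Xᵀ * Y) := by
    rw [← trace_transpose, transpose_mul, hY.eq, trace_mul_comm]
  simp only [frobInner, symPart, transpose_smul, transpose_add, transpose_transpose,
    Matrix.smul_mul, Matrix.add_mul, trace_smul, trace_add, hXY, smul_eq_mul]
  ring

theorem frobInner_vecMulVec_left (w v : Fin n → ℝ) (Y : Matrix (Fin n) (Fin n) ℝ) :
    frobInner (vecMulVec w v) Y = w ⬝ᵥ (Y *ᵥ v) := by
  simp only [frobInner_eq_sum, vecMulVec_apply, dotProduct, mulVec, Finset.mul_sum]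
  refine Finset.sum_congr rfl fun i _ => Finset.sum_congr rfl fun j _ => ?_
  ring

end Frobenius

theorem dotProduct_single_sub_smul_sum {n m : ℕ} (i : Fin n) (c : ℝ) (idx : Fin m → Fin n)
    (x : Fin n → ℝ) :
    (Pi.single i 1 - c • ∑ j, Pi.single (idx j) 1) ⬝ᵥ x = x i - c * ∑ j, x (idx j) := by
  simp [sub_dotProduct, smul_dotProduct, sum_dotProduct, single_dotProduct]

theorem hasDerivAt_half_sum_sq {ι : Type*} [Fintype ι] {c : ι → ℝ → ℝ} {c' : ι → ℝ} {t : ℝ}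
    (hc : ∀ k, HasDerivAt (c k) (c' k) t) :
    HasDerivAt (fun s => (1 / 2) * ∑ k, c k s ^ 2) (∑ k, c k t * c' k) t := by
  refine ((HasDerivAt.fun_sum fun k _ => (hc k).fun_pow 2).const_mul (1 / 2 : ℝ)).congr_deriv ?_
  rw [Finset.mul_sum]
  refine Finset.sum_congr rfl fun k _ => ?_
  push_cast
  ring

theorem dotProduct_mulVec_mulVec_eq_frobInner_symPart {n : ℕ} {P Y : Matrix (Fin n) (Fin n) ℝ}
    (hP : P.IsSymm) (hY : Y.IsSymm) (a v : Fin n → ℝ) :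
    a ⬝ᵥ (P *ᵥ (Y *ᵥ v)) = frobInner (symPart (vecMulVec (P *ᵥ a) v)) Y := by
  rw [frobInner_symPart_left _ _ hY, frobInner_vecMulVec_left, dotProduct_mulVec,
    ← mulVec_transpose, hP.eq]

theorem deriv_dispersion_functional_undirected_general
    {n m : ℕ} (A : Matrix (Fin n) (Fin n) ℝ) (hA : A.IsSymm) (ε : ℝ)
    (I : Set ℝ) (hI : IsOpen I)
    (E E' : ℝ → Matrix (Fin n) (Fin n) ℝ) (hEsymm : ∀ t ∈ I, (E t).IsSymm)
    (lam : ℝ → ℝ) (v v' : ℝ → Fin n → ℝ)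
    (Api : ℝ → Matrix (Fin n) (Fin n) ℝ)
    (hE : ∀ t ∈ I, ∀ i j, HasDerivAt (fun s => E s i j) (E' t i j) t)
    (hv : ∀ t ∈ I, ∀ i, HasDerivAt (fun s => v s i) (v' t i) t)
    (hpi : ∀ t ∈ I,
      (A + ε • E t - lam t • 1) * Api t * (A + ε • E t - lam t • 1)
        = A + ε • E t - lam t • 1 ∧
      Api t * (A + ε • E t - lam t • 1) * Api t = Api t ∧
      ((A + ε • E t - lam t • 1) * Api t)ᵀ = (A + ε • E t - lam t • 1) * Api t ∧
      (Api t * (A + ε • E t - lam t • 1))ᵀ = Api t * (A + ε • E t - lam t • 1))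
    (hvder : ∀ t ∈ I, v' t = -(ε • (Api t *ᵥ (E' t *ᵥ v t))))
    (idx : Fin m → Fin n)
    (F : ℝ → ℝ)
    (hF : F = fun t => (1 / 2) * ∑ k, (v t (idx k) - (1 / (m : ℝ)) * ∑ j, v t (idx j)) ^ 2)
    (Ed : Set (Fin n × Fin n)) [DecidablePred (· ∈ Ed)]
    (hsupp : ∀ t ∈ I, ∀ i j, (i, j) ∉ Ed → E' t i j = 0)
    (G : ℝ → Matrix (Fin n) (Fin n) ℝ)
    (hG : ∀ t, G t = -projPattern Ed (∑ k, (v t (idx k) - (1 / (m : ℝ)) * ∑ j, v t (idx j)) •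
      symPart (vecMulVec
        (Api t *ᵥ ((Pi.single (idx k) 1 : Fin n → ℝ)
          - (1 / (m : ℝ)) • ∑ j, (Pi.single (idx j) 1 : Fin n → ℝ)))
        (v t)))) :
    ∀ t ∈ I, HasDerivAt F (ε * frobInner (G t) (E' t)) t := by
  intro t ht
  have hN : (A + ε • E t - lam t • 1).IsSymm :=
    (hA.add ((hEsymm t ht).smul ε)).sub (isSymm_one.smul _)
  have hApi : (Api t).IsSymm := IsPenroseInverse.isSymm (hpi t ht) hN
  have hE' : (E' t).IsSymm :=
    IsSymm.of_hasDerivAt (hE t ht) (eventually_of_mem (hI.mem_nhds ht) hEsymm)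
  have hc (k : Fin m) : HasDerivAt (fun s => v s (idx k) - (1 / (m : ℝ)) * ∑ j, v s (idx j))
      (v' t (idx k) - (1 / (m : ℝ)) * ∑ j, v' t (idx j)) t :=
    (hv t ht (idx k)).sub ((HasDerivAt.fun_sum fun j _ => hv t ht (idx j)).const_mul _)
  rw [hF]
  refine (hasDerivAt_half_sum_sq hc).congr_deriv ?_
  rw [hG, frobInner_neg_left, frobInner_projPattern_left Ed _ _ (hsupp t ht),
    frobInner_sum_smul_left, mul_neg, Finset.mul_sum _ _ ε, ← Finset.sum_neg_distrib]
  refine Finset.sum_congr rfl fun k _ => ?_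
  rw [← dotProduct_single_sub_smul_sum (idx k) (1 / (m : ℝ)) idx (v' t), hvder t ht,
    dotProduct_neg, dotProduct_smul, dotProduct_mulVec_mulVec_eq_frobInner_symPart hApi hE',
    smul_eq_mul]
  ring

/-- Fully constrained gradient of the dispersion functional (undirected graphs):
with `v(t)` the unit eigenvector of the symmetric matrix `A + εE(t)`, `A†(t)` the
Moore–Penrose pseudoinverse of `A + εE(t) − λ(t)I`, the eigenvector-derivative formula
`v̇ = −ε A† Ė v`, and `Ė(t)` supported on a symmetric edge set `ℰ`,
the functional `F(t) = ½ Σ_k ( v_{i_k}(t) − ⟨v(t)⟩_m )²` satisfies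
`Ḟ(t) = ε ⟨G(t), Ė(t)⟩` with
`G = −P_ℰ( Σ_k ( v_{i_k} − ⟨v⟩_m ) sym( A† (u_{i_k} − ū) vᵀ ) )`. -/
theorem deriv_dispersion_functional_undirected
    {n m : ℕ} (A : Matrix (Fin n) (Fin n) ℝ) (hA : A.IsSymm) (ε : ℝ) (hε : 0 < ε)
    (I : Set ℝ) (hI : IsOpen I)
    (E E' : ℝ → Matrix (Fin n) (Fin n) ℝ) (hEsymm : ∀ t ∈ I, (E t).IsSymm)
    (lam : ℝ → ℝ) (v v' : ℝ → Fin n → ℝ)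
    (Api : ℝ → Matrix (Fin n) (Fin n) ℝ)
    (hE : ∀ t ∈ I, ∀ i j, HasDerivAt (fun s => E s i j) (E' t i j) t)
    (hv : ∀ t ∈ I, ∀ i, HasDerivAt (fun s => v s i) (v' t i) t)
    (hnorm : ∀ t ∈ I, Real.sqrt (∑ i, v t i ^ 2) = 1)
    (heig : ∀ t ∈ I, (A + ε • E t) *ᵥ v t = lam t • v t)
    (hpi : ∀ t ∈ I,
      (A + ε • E t - lam t • 1) * Api t * (A + ε • E t - lam t • 1)
        = A + ε • E t - lam t • 1 ∧
      Api t * (A + ε • E t - lam t • 1) * Api t = Api t ∧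
      ((A + ε • E t - lam t • 1) * Api t)ᵀ = (A + ε • E t - lam t • 1) * Api t ∧
      (Api t * (A + ε • E t - lam t • 1))ᵀ = Api t * (A + ε • E t - lam t • 1))
    (hvder : ∀ t ∈ I, v' t = -(ε • (Api t *ᵥ (E' t *ᵥ v t))))
    (idx : Fin m → Fin n) (hidx : Function.Injective idx)
    (F : ℝ → ℝ)
    (hF : F = fun t => (1 / 2) * ∑ k, (v t (idx k) - (1 / (m : ℝ)) * ∑ j, v t (idx j)) ^ 2)
    (Ed : Set (Fin n × Fin n)) [DecidablePred (· ∈ Ed)]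
    (hEdsymm : ∀ i j, (i, j) ∈ Ed → (j, i) ∈ Ed)
    (hsupp : ∀ t ∈ I, ∀ i j, (i, j) ∉ Ed → E' t i j = 0)
    (G : ℝ → Matrix (Fin n) (Fin n) ℝ)
    (hG : ∀ t, G t = -projPattern Ed (∑ k, (v t (idx k) - (1 / (m : ℝ)) * ∑ j, v t (idx j)) •
      symPart (vecMulVec
        (Api t *ᵥ ((Pi.single (idx k) 1 : Fin n → ℝ)
          - (1 / (m : ℝ)) • ∑ j, (Pi.single (idx j) 1 : Fin n → ℝ)))
        (v t)))) :
    ∀ t ∈ I, HasDerivAt F (ε * frobInner (G t) (E' t)) t :=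
  deriv_dispersion_functional_undirected_general A hA ε I hI E E' hEsymm lam v v' Api hE hv hpi
    hvder idx F hF Ed hsupp G hG
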